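/- (Grönwall's lemma, integral form, W^{1,1} source.) Let T ∈ (0, ∞]. Let α : [0, T) → ℝ be essentially bounded measurable, λ : [0, T) → ℝ integrable with λ(t) ≥ 0 a.e., and let ψ : [0, T) → ℝ be absolutely continuous with integrable derivative, i.e. there is an integrable function ψ' with ψ(t) = ψ(0) + ∫₀ᵗ ψ'(s) ds for all t. Define γ(t) := ∫₀ᵗ λ(τ) dτ. If α(t) ≤ ψ(t) + ∫₀ᵗ λ(s) α(s) ds for almost every t, then for almost every t ∈ [0, T), α(t) ≤ e^{γ(t)} ( ψ(0) + ∫₀ᵗ e^{−γ(s)} ψ'(s) ds ). -/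

import Mathlib

/-!
Multiply the majorant `R t = ψ t + ∫₀ᵗ λ α` by the integrating factor `exp (-∫₀ᵗ λ)`. Both
factors are absolutely continuous, and almost everywhere `R' = ψ' + λ α ≤ ψ' + λ R` because
`λ ≥ 0` and `α ≤ R`, so the product has derivative at most `exp (-∫₀ᵗ λ) ψ'`. Integrating this
with the fundamental theorem of calculus for absolutely continuous functions bounds `R t`, hence
`α t`.
-/

open MeasureTheory Filter Set

theorem LipschitzOnWith.comp_absolutelyContinuousOnInterval {X Y : Type*} [PseudoMetricSpace X]
    [PseudoMetricSpace Y] {φ : X → Y} {K : NNReal} {s : Set X} {f : ℝ → X} {a b : ℝ}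
    (hφ : LipschitzOnWith K φ s) (hfs : MapsTo f (uIcc a b) s)
    (hf : AbsolutelyContinuousOnInterval f a b) :
    AbsolutelyContinuousOnInterval (φ ∘ f) a b := by
  unfold AbsolutelyContinuousOnInterval at hf ⊢
  refine squeeze_zero' (Eventually.of_forall fun E => Finset.sum_nonneg fun _ _ => dist_nonneg)
    ?_ (by simpa using hf.const_mul (K : ℝ))
  filter_upwards [mem_inf_of_right (mem_principal_self _)] with E hE
  rw [Finset.mul_sum]
  exact Finset.sum_le_sum fun i hi =>
    hφ.dist_le_mul _ (hfs (hE.1 i hi).1) _ (hfs (hE.1 i hi).2)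

theorem ContDiff.comp_absolutelyContinuousOnInterval {F : Type*} [NormedAddCommGroup F]
    [NormedSpace ℝ F] {φ : ℝ → F} {f : ℝ → ℝ} {a b : ℝ} (hφ : ContDiff ℝ 1 φ)
    (hf : AbsolutelyContinuousOnInterval f a b) :
    AbsolutelyContinuousOnInterval (φ ∘ f) a b := by
  obtain ⟨C, hC⟩ := hf.exists_bound
  obtain ⟨K, hK⟩ :=
    hφ.contDiffOn.exists_lipschitzOnWith one_ne_zero (convex_Icc (-C) C) isCompact_Icc
  exact hK.comp_absolutelyContinuousOnInterval (fun x hx => abs_le.mp (hC x hx)) hf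

theorem AbsolutelyContinuousOnInterval.le_exp_integral_mul_of_ae_deriv_le {R l h : ℝ → ℝ}
    {a b : ℝ} (hab : a ≤ b) (hR : AbsolutelyContinuousOnInterval R a b)
    (hl : IntervalIntegrable l volume a b) (hh : IntervalIntegrable h volume a b)
    (hderiv : ∀ᵐ s, s ∈ Icc a b → deriv R s ≤ h s + l s * R s) :
    R b ≤ Real.exp (∫ s in a..b, l s)
      * (R a + ∫ s in a..b, Real.exp (-(∫ r in a..s, l r)) * h s) := by
  set E : ℝ → ℝ := fun s => Real.exp (-(∫ r in a..s, l r)) with hE_def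
  have hE : AbsolutelyContinuousOnInterval E a b :=
    Real.contDiff_exp.comp_absolutelyContinuousOnInterval
      (hl.absolutelyContinuousOnInterval_intervalIntegral left_mem_uIcc).neg
  have hE_deriv : ∀ᵐ s, s ∈ uIcc a b → deriv E s = -(l s * E s) := by
    filter_upwards [hl.ae_hasDerivAt_integral] with s hs hsab
    rw [((hs hsab a left_mem_uIcc).fun_neg.exp).deriv]
    ring
  have hproduct : E b * R b - R a ≤ ∫ s in a..b, E s * h s := by
    have hEa : E a = 1 := by simp [hE_def]
    rw [← one_mul (R a), ← hEa, ← hE.integral_deriv_mul_eq_sub hR]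
    refine intervalIntegral.integral_mono_ae_restrict hab
      ((hE.intervalIntegrable_deriv.mul_continuousOn hR.continuousOn).add
        (hR.intervalIntegrable_deriv.continuousOn_mul hE.continuousOn))
      (hh.continuousOn_mul hE.continuousOn) ?_
    rw [EventuallyLE, ae_restrict_iff' measurableSet_Icc]
    filter_upwards [hE_deriv, hderiv] with s hEs hRs hs
    rw [hEs (Icc_subset_uIcc hs)]
    nlinarith [mul_le_mul_of_nonneg_left (hRs hs) (Real.exp_pos (-(∫ r in a..s, l r))).le]
  calc R b = Real.exp (∫ s in a..b, l s) * (E b * R b) := by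
        rw [hE_def, ← mul_assoc, ← Real.exp_add, add_neg_cancel, Real.exp_zero, one_mul]
    _ ≤ Real.exp (∫ s in a..b, l s) * (R a + ∫ s in a..b, E s * h s) := by
        gcongr
        linarith

theorem add_integral_le_exp_integral_mul_of_ae_le {g l h : ℝ → ℝ} {a b c : ℝ} (hab : a ≤ b)
    (hg : IntervalIntegrable g volume a b) (hl : IntervalIntegrable l volume a b)
    (hh : IntervalIntegrable h volume a b)
    (hle : ∀ᵐ s, s ∈ Icc a b → g s ≤ h s + l s * (c + ∫ r in a..s, g r)) :
    c + ∫ s in a..b, g s ≤ Real.exp (∫ s in a..b, l s)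
      * (c + ∫ s in a..b, Real.exp (-(∫ r in a..s, l r)) * h s) := by
  have hR : AbsolutelyContinuousOnInterval (fun s => c + ∫ r in a..s, g r) a b :=
    (contDiff_const.add contDiff_id).comp_absolutelyContinuousOnInterval
      (hg.absolutelyContinuousOnInterval_intervalIntegral left_mem_uIcc)
  have hderiv : ∀ᵐ s, s ∈ Icc a b → deriv (fun s => c + ∫ r in a..s, g r) s
      ≤ h s + l s * (c + ∫ r in a..s, g r) := by
    filter_upwards [hg.ae_hasDerivAt_integral, hle] with s hs hles hsab
    rw [((hs (Icc_subset_uIcc hsab) a left_mem_uIcc).const_add c).deriv]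
    exact hles hsab
  simpa using hR.le_exp_integral_mul_of_ae_deriv_le hab hl hh hderiv

theorem measurableSet_nonneg_coe_lt (T : EReal) :
    MeasurableSet {t : ℝ | 0 ≤ t ∧ (t : EReal) < T} :=
  measurableSet_Ici.inter (measurable_coe_real_ereal measurableSet_Iio)

theorem uIcc_zero_subset_nonneg_coe_lt {T : EReal} {t : ℝ}
    (ht : t ∈ {t : ℝ | 0 ≤ t ∧ (t : EReal) < T}) :
    uIcc 0 t ⊆ {t : ℝ | 0 ≤ t ∧ (t : EReal) < T} := by
  rw [uIcc_of_le ht.1]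
  exact fun s hs => ⟨hs.1, (EReal.coe_le_coe_iff.mpr hs.2).trans_lt ht.2⟩

theorem gronwall_integral_W11_source_general
    (T : EReal)
    (α ψ ψ' lam : ℝ → ℝ)
    (S : Set ℝ) (hS : S = {t : ℝ | 0 ≤ t ∧ (t : EReal) < T})
    (hα_meas : Measurable α)
    (hα_bdd : ∃ C : ℝ, ∀ᵐ t ∂(volume.restrict S), |α t| ≤ C)
    (hlam_int : IntegrableOn lam S)
    (hlam_nonneg : ∀ᵐ t ∂(volume.restrict S), 0 ≤ lam t)
    (hψ'_int : IntegrableOn ψ' S)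
    (hψ_ac : ∀ t ∈ S, ψ t = ψ 0 + ∫ s in (0:ℝ)..t, ψ' s)
    (h : ∀ᵐ t ∂(volume.restrict S), α t ≤ ψ t + ∫ s in (0:ℝ)..t, lam s * α s) :
    ∀ᵐ t ∂(volume.restrict S),
      α t ≤ Real.exp (∫ τ in (0:ℝ)..t, lam τ)
        * (ψ 0 + ∫ s in (0:ℝ)..t, Real.exp (-(∫ τ in (0:ℝ)..s, lam τ)) * ψ' s) := by
  obtain ⟨C, hC⟩ := hα_bdd
  have hS_uIcc : ∀ t ∈ S, uIcc 0 t ⊆ S := hS ▸ fun t => uIcc_zero_subset_nonneg_coe_lt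
  have hint : ∀ {f : ℝ → ℝ}, IntegrableOn f S → ∀ t ∈ S, IntervalIntegrable f volume 0 t :=
    fun hf t ht => (hf.mono_set (hS_uIcc t ht)).intervalIntegrable
  have hlamα_int : IntegrableOn (fun s => lam s * α s) S :=
    (hlam_int.bdd_mul hα_meas.aestronglyMeasurable hC).congr
      (Eventually.of_forall fun s => mul_comm _ _)
  have hsplit : ∀ t ∈ S,
      ψ 0 + ∫ s in (0:ℝ)..t, (ψ' s + lam s * α s) = ψ t + ∫ s in (0:ℝ)..t, lam s * α s := by
    intro t ht
    rw [intervalIntegral.integral_add (hint hψ'_int t ht) (hint hlamα_int t ht), hψ_ac t ht]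
    ring
  rw [ae_restrict_iff' (hS ▸ measurableSet_nonneg_coe_lt T)] at h hlam_nonneg ⊢
  filter_upwards [h] with t ht htS
  have hle : ∀ᵐ s, s ∈ Icc 0 t → ψ' s + lam s * α s
      ≤ ψ' s + lam s * (ψ 0 + ∫ r in (0:ℝ)..s, (ψ' r + lam r * α r)) := by
    filter_upwards [h, hlam_nonneg] with s hs hlams hst
    have hsS := hS_uIcc t htS (Icc_subset_uIcc hst)
    rw [hsplit s hsS]
    gcongr
    · exact hlams hsS
    · exact hs hsS
  calc α t ≤ ψ t + ∫ s in (0:ℝ)..t, lam s * α s := ht htS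
    _ = ψ 0 + ∫ s in (0:ℝ)..t, (ψ' s + lam s * α s) := (hsplit t htS).symm
    _ ≤ _ := add_integral_le_exp_integral_mul_of_ae_le (hS ▸ htS).1
          (hint (hψ'_int.add hlamα_int) t htS) (hint hlam_int t htS) (hint hψ'_int t htS) hle

/-- Grönwall's lemma, integral form, with a `W^{1,1}` source `ψ`, on the interval
`[0, T)` with `T ∈ (0, ∞]` (encoded as `T : EReal` with `0 < T`). -/
theorem gronwall_integral_W11_source
    (T : EReal) (hT : 0 < T)
    (α ψ ψ' lam : ℝ → ℝ)
    (S : Set ℝ) (hS : S = {t : ℝ | 0 ≤ t ∧ (t : EReal) < T})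
    (hα_meas : Measurable α)
    (hα_bdd : ∃ C : ℝ, ∀ᵐ t ∂(volume.restrict S), |α t| ≤ C)
    (hlam_int : IntegrableOn lam S)
    (hlam_nonneg : ∀ᵐ t ∂(volume.restrict S), 0 ≤ lam t)
    (hψ'_int : IntegrableOn ψ' S)
    (hψ_ac : ∀ t ∈ S, ψ t = ψ 0 + ∫ s in (0:ℝ)..t, ψ' s)
    (h : ∀ᵐ t ∂(volume.restrict S), α t ≤ ψ t + ∫ s in (0:ℝ)..t, lam s * α s) :
    ∀ᵐ t ∂(volume.restrict S),
      α t ≤ Real.exp (∫ τ in (0:ℝ)..t, lam τ)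
        * (ψ 0 + ∫ s in (0:ℝ)..t, Real.exp (-(∫ τ in (0:ℝ)..s, lam τ)) * ψ' s) :=
  gronwall_integral_W11_source_general T α ψ ψ' lam S hS hα_meas hα_bdd hlam_int hlam_nonneg hψ'_int
    hψ_ac h
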